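/- arXiv:2405.16469 — 5 statements merged into one kernel-verified Lean document; each statement's English description precedes it below -/
import Mathlib

section
/- −1 ≤ r ≤ 1; that is, −1 ≤ 6·E[F(X,Y) − H(X)·G(Y)] ≤ 1. -/
/-!
For fixed `(x, y)`, `F x y - H x * G y = P(A ∩ B) - P(A) P(B)` with `A = {X ≤ x}`, `B = {Y ≤ y}`,
and the Fréchet bounds `max 0 (a + b - 1) ≤ P(A ∩ B) ≤ min a b` give
`|P(A ∩ B) - a b| ≤ (a (1 - a) + b (1 - b)) / 2`. Absolute continuity makes both marginals
atomless, so `H(X)` is uniform on `[0, 1]` and `E[H(X) (1 - H(X))] = 1/6` (likewise for `G(Y)`),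
which Fubini computes by comparing integrals over `{x' ≤ x}` and `{x < x'}` in both orders.
Averaging the pointwise bound gives `|E[F(X,Y) - H(X) G(Y)]| ≤ 1/6`.
-/

open MeasureTheory ProbabilityTheory Set

lemma abs_sub_mul_le_of_frechet_bounds {a b p : ℝ} (hp : 0 ≤ p) (hpa : p ≤ a) (hpb : p ≤ b)
    (hab : a + b ≤ 1 + p) :
    |p - a * b| ≤ (a * (1 - a) + b * (1 - b)) / 2 := by
  rw [abs_le]
  constructor
  · rcases le_total (a + b) 1 with h | h
    · nlinarith [mul_nonneg (add_nonneg (hp.trans hpa) (hp.trans hpb)) (sub_nonneg.2 h)]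
    · nlinarith [mul_nonneg (sub_nonneg.2 h) (by linarith : (0:ℝ) ≤ 2 - (a + b))]
  · rcases le_total a b with h | h
    · nlinarith [mul_nonneg (sub_nonneg.2 h) (by linarith : (0:ℝ) ≤ 1 - (b - a))]
    · nlinarith [mul_nonneg (sub_nonneg.2 h) (by linarith : (0:ℝ) ≤ 1 - (a - b))]

lemma abs_measureReal_inter_sub_mul_le {α : Type*} [MeasurableSpace α] {μ : Measure α}
    [IsProbabilityMeasure μ] (s : Set α) {t : Set α} (ht : MeasurableSet t) :
    |μ.real (s ∩ t) - μ.real s * μ.real t| ≤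
      (μ.real s * (1 - μ.real s) + μ.real t * (1 - μ.real t)) / 2 := by
  refine abs_sub_mul_le_of_frechet_bounds measureReal_nonneg
    (measureReal_mono inter_subset_left) (measureReal_mono inter_subset_right) ?_
  linarith [measureReal_union_add_inter (μ := μ) (s := s) ht,
    measureReal_le_one (μ := μ) (s := s ∪ t)]

lemma nullSingletonClass_map_fst {α β : Type*} [MeasurableSpace α] [MeasurableSingletonClass α]
    [MeasurableSpace β] {μ : Measure α} {ν : Measure β} [NullSingletonClass μ] [SFinite ν]
    {π : Measure (α × β)} (h : π ≪ μ.prod ν) : NullSingletonClass (π.map Prod.fst) := by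
  refine ⟨fun a => ?_⟩
  rw [Measure.map_apply measurable_fst (measurableSet_singleton a), ← prod_univ]
  exact h (by simp [Measure.prod_prod])

lemma nullSingletonClass_map_snd {α β : Type*} [MeasurableSpace α] [MeasurableSpace β]
    [MeasurableSingletonClass β] {μ : Measure α} {ν : Measure β} [SFinite ν]
    [NullSingletonClass ν] {π : Measure (α × β)} (h : π ≪ μ.prod ν) :
    NullSingletonClass (π.map Prod.snd) := by
  refine ⟨fun b => ?_⟩
  rw [Measure.map_apply measurable_snd (measurableSet_singleton b), ← univ_prod]
  exact h (by simp [Measure.prod_prod])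

section
variable {ν : Measure ℝ}

lemma integrable_measureReal_Iic [IsFiniteMeasure ν] :
    Integrable (fun x => ν.real (Iic x)) ν := by
  have hmono : Monotone fun x => ν.real (Iic x) :=
    fun _ _ h => measureReal_mono (Iic_subset_Iic.2 h)
  refine .of_bound hmono.measurable.aestronglyMeasurable (ν.real univ) (ae_of_all _ fun x => ?_)
  rw [Real.norm_of_nonneg measureReal_nonneg]
  exact measureReal_mono (subset_univ _)

-- Both `∫ ν (Iic x) dν(x)` and `∫ ν (Ici y) dν(y)` equal `(ν ⊗ ν) {y ≤ x}`, and without atoms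
-- `ν (Ici y) = ν univ - ν (Iic y)`.
lemma integral_measureReal_Iic [IsFiniteMeasure ν] [NullSingletonClass ν] :
    ∫ x, ν.real (Iic x) ∂ν = ν.real univ ^ 2 / 2 := by
  set T : Set (ℝ × ℝ) := {p | p.2 ≤ p.1}
  have hswap := integral_integral_swap (μ := ν) (ν := ν) (f := fun x y => T.indicator 1 (x, y))
    ((integrable_const (1 : ℝ)).indicator (measurableSet_le measurable_snd measurable_fst))
  have hIic (x : ℝ) : ∫ y, T.indicator (1 : ℝ × ℝ → ℝ) (x, y) ∂ν = ν.real (Iic x) :=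
    integral_indicator_one measurableSet_Iic
  have hIci (y : ℝ) : ∫ x, T.indicator (1 : ℝ × ℝ → ℝ) (x, y) ∂ν =
      ν.real univ - ν.real (Iic y) := by
    rw [← measureReal_congr (Iio_ae_eq_Iic (μ := ν)), ← measureReal_compl measurableSet_Iio,
      compl_Iio]
    exact integral_indicator_one measurableSet_Ici
  simp only [hIic, hIci] at hswap
  rw [integral_sub (integrable_const _) integrable_measureReal_Iic, integral_const,
    smul_eq_mul] at hswap
  linarith

lemma integrable_cdf_comp {α : Type*} [MeasurableSpace α] {m : Measure α} [IsFiniteMeasure m]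
    {f : α → ℝ} (hf : Measurable f) : Integrable (fun a => cdf ν (f a)) m := by
  refine .of_bound ((monotone_cdf ν).measurable.comp hf).aestronglyMeasurable 1
    (ae_of_all _ fun a => ?_)
  rw [Real.norm_of_nonneg (cdf_nonneg ν _)]
  exact cdf_le_one ν _

lemma integrable_cdf_mul_one_sub_cdf_comp {α : Type*} [MeasurableSpace α] {m : Measure α}
    [IsFiniteMeasure m] {f : α → ℝ} (hf : Measurable f) :
    Integrable (fun a => cdf ν (f a) * (1 - cdf ν (f a))) m :=
  (integrable_cdf_comp hf).mul_of_top_left <| memLp_top_of_bound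
    (measurable_const.sub ((monotone_cdf ν).measurable.comp hf)).aestronglyMeasurable 1
    (ae_of_all _ fun a => by
      rw [Real.norm_of_nonneg (sub_nonneg.2 (cdf_le_one ν _))]
      linarith [cdf_nonneg ν (f a)])

variable [IsProbabilityMeasure ν] [NullSingletonClass ν]

lemma integral_cdf : ∫ x, cdf ν x ∂ν = 1 / 2 := by
  simp_rw [cdf_eq_real]
  rw [integral_measureReal_Iic, probReal_univ]
  norm_num

lemma setIntegral_cdf_Iic (a : ℝ) : ∫ x in Iic a, cdf ν x ∂ν = cdf ν a ^ 2 / 2 := by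
  rw [cdf_eq_real, ← measureReal_restrict_apply_univ, ← integral_measureReal_Iic]
  refine setIntegral_congr_fun measurableSet_Iic fun x hx => ?_
  rw [cdf_eq_real, measureReal_restrict_apply measurableSet_Iic, Iic_inter_Iic, min_eq_left hx]

-- Integrating `cdf ν x` over `{x < z}` in both orders gives `∫ c (1 - c) = ∫ c ^ 2 / 2`,
-- while `∫ c ^ 2 = ∫ c - ∫ c (1 - c) = 1/2 - ∫ c (1 - c)`.
lemma integral_cdf_mul_one_sub_cdf : ∫ x, cdf ν x * (1 - cdf ν x) ∂ν = 1 / 6 := by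
  set S : Set (ℝ × ℝ) := {p | p.1 < p.2}
  have hswap := integral_integral_swap (μ := ν) (ν := ν)
    (f := fun x z => S.indicator (fun p => cdf ν p.1) (x, z))
    ((integrable_cdf_comp measurable_fst).indicator
      (measurableSet_lt measurable_fst measurable_snd))
  have hIoi (x : ℝ) : ∫ z, S.indicator (fun p => cdf ν p.1) (x, z) ∂ν =
      cdf ν x * (1 - cdf ν x) := by
    calc _ = ν.real (Ioi x) • cdf ν x := integral_indicator_const _ measurableSet_Ioi
      _ = _ := by
        rw [smul_eq_mul, ← compl_Iic, probReal_compl_eq_one_sub measurableSet_Iic, ← cdf_eq_real,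
          mul_comm]
  have hIio (z : ℝ) : ∫ x, S.indicator (fun p => cdf ν p.1) (x, z) ∂ν = cdf ν z ^ 2 / 2 := by
    rw [← setIntegral_cdf_Iic, ← setIntegral_congr_set (Iio_ae_eq_Iic (μ := ν) (a := z)),
      ← integral_indicator measurableSet_Iio]
    rfl
  simp only [hIoi, hIio] at hswap
  have hsq : ∫ z, cdf ν z ^ 2 ∂ν = 1 / 2 - ∫ x, cdf ν x * (1 - cdf ν x) ∂ν := by
    rw [← integral_cdf (ν := ν), ← integral_sub (integrable_cdf_comp (m := ν) measurable_id')
      (integrable_cdf_mul_one_sub_cdf_comp measurable_id')]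
    congr 1 with z
    ring
  rw [integral_div, hsq] at hswap
  linarith

end

section
variable {Ω : Type*} [MeasurableSpace Ω] {μ : Measure Ω} [IsProbabilityMeasure μ] {X : Ω → ℝ}

lemma cdf_map (hX : Measurable X) : cdf (μ.map X) = fun x => μ.real {ω | X ω ≤ x} := by
  have := Measure.isProbabilityMeasure_map (μ := μ) hX.aemeasurable
  ext x
  rw [cdf_eq_real, map_measureReal_apply hX measurableSet_Iic]
  rfl

variable {Y : Ω → ℝ}

lemma integral_cdf_map_mul_one_sub_cdf_map (hX : Measurable X)
    [NullSingletonClass (μ.map X)] :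
    ∫ ω, cdf (μ.map X) (X ω) * (1 - cdf (μ.map X) (X ω)) ∂μ = 1 / 6 := by
  have := Measure.isProbabilityMeasure_map (μ := μ) hX.aemeasurable
  rw [← integral_cdf_mul_one_sub_cdf (ν := μ.map X), integral_map hX.aemeasurable]
  exact (integrable_cdf_mul_one_sub_cdf_comp measurable_id').aestronglyMeasurable

lemma abs_integral_joint_cdf_sub_cdf_mul_cdf_le (hX : Measurable X) (hY : Measurable Y)
    [NullSingletonClass (μ.map X)] [NullSingletonClass (μ.map Y)] :
    |∫ ω, (μ.real {ω' | X ω' ≤ X ω ∧ Y ω' ≤ Y ω} -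
      cdf (μ.map X) (X ω) * cdf (μ.map Y) (Y ω)) ∂μ| ≤ 1 / 6 := by
  set H := cdf (μ.map X)
  set G := cdf (μ.map Y)
  have hH : ∀ x, H x = μ.real {ω | X ω ≤ x} := congrFun (cdf_map hX)
  have hG : ∀ y, G y = μ.real {ω | Y ω ≤ y} := congrFun (cdf_map hY)
  have hmajorant : Integrable (fun ω => H (X ω) * (1 - H (X ω)) + G (Y ω) * (1 - G (Y ω))) μ :=
    (integrable_cdf_mul_one_sub_cdf_comp hX).add (integrable_cdf_mul_one_sub_cdf_comp hY)
  calc _ ≤ ∫ ω, |μ.real {ω' | X ω' ≤ X ω ∧ Y ω' ≤ Y ω} - H (X ω) * G (Y ω)| ∂μ :=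
        abs_integral_le_integral_abs
    _ ≤ ∫ ω, (H (X ω) * (1 - H (X ω)) + G (Y ω) * (1 - G (Y ω))) / 2 ∂μ := by
        refine integral_mono_of_nonneg (ae_of_all _ fun _ => abs_nonneg _)
          (hmajorant.div_const 2) (ae_of_all _ fun ω => ?_)
        simp only [hH, hG]
        exact abs_measureReal_inter_sub_mul_le _ (measurableSet_le hY measurable_const)
    _ = 1 / 6 := by
        rw [integral_div, integral_add (integrable_cdf_mul_one_sub_cdf_comp hX)
          (integrable_cdf_mul_one_sub_cdf_comp hY), integral_cdf_map_mul_one_sub_cdf_map hX,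
          integral_cdf_map_mul_one_sub_cdf_map hY]
        norm_num

end

/-- For a random vector `(X, Y)` with absolutely continuous joint
distribution, joint CDF `F` and marginal CDFs `H`, `G`, the correlation coefficient
`r = 6·E[F(X,Y) − H(X)·G(Y)]` satisfies `−1 ≤ r ≤ 1`. -/
theorem neg_one_le_r_and_r_le_one
    {Ω : Type*} [MeasurableSpace Ω] {μ : Measure Ω} [IsProbabilityMeasure μ]
    (X Y : Ω → ℝ) (hX : Measurable X) (hY : Measurable Y)
    (F : ℝ → ℝ → ℝ) (H G : ℝ → ℝ)
    (hF : ∀ x y, F x y = (μ {ω | X ω ≤ x ∧ Y ω ≤ y}).toReal)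
    (hH : ∀ x, H x = (μ {ω | X ω ≤ x}).toReal)
    (hG : ∀ y, G y = (μ {ω | Y ω ≤ y}).toReal)
    (habs : Measure.map (fun ω => (X ω, Y ω)) μ ≪ (volume : Measure (ℝ × ℝ))) :
    -1 ≤ 6 * ∫ ω, (F (X ω) (Y ω) - H (X ω) * G (Y ω)) ∂μ ∧
      6 * ∫ ω, (F (X ω) (Y ω) - H (X ω) * G (Y ω)) ∂μ ≤ 1 := by
  have hXY : Measurable fun ω => (X ω, Y ω) := hX.prodMk hY
  rw [Measure.volume_eq_prod] at habs
  have : NullSingletonClass (μ.map X) := by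
    simpa only [Measure.map_map measurable_fst hXY, Function.comp_def] using
      nullSingletonClass_map_fst habs
  have : NullSingletonClass (μ.map Y) := by
    simpa only [Measure.map_map measurable_snd hXY, Function.comp_def] using
      nullSingletonClass_map_snd habs
  obtain rfl : H = cdf (μ.map X) := by rw [cdf_map hX]; exact funext hH
  obtain rfl : G = cdf (μ.map Y) := by rw [cdf_map hY]; exact funext hG
  obtain rfl : F = fun x y => μ.real {ω | X ω ≤ x ∧ Y ω ≤ y} := funext₂ hF
  have := abs_le.1 (abs_integral_joint_cdf_sub_cdf_mul_cdf_le (μ := μ) hX hY)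
  constructor <;> linarith
end

section
/- For every t ∈ (−1,1): (3/π)·|arcsin(t) − arcsin(t/2)| ≤ (2/π)·|arcsin(t)| ≤ (6/π)·|arcsin(t/2)| ≤ |t|; that is, for the bivariate normal distribution |r| ≤ |τ| ≤ |ρ_S| ≤ |ρ|. -/
open Real

private lemma key_arcsin (s : ℝ) (h0 : 0 ≤ s) (h1 : s ≤ 1) :
    Real.arcsin s ≤ 3 * Real.arcsin (s / 2) := by
  have hpi := Real.pi_pos
  set u := Real.arcsin (s / 2) with hu
  have hsin : Real.sin u = s / 2 := Real.sin_arcsin (by linarith) (by linarith)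
  have hu0 : 0 ≤ u := Real.arcsin_nonneg.2 (by linarith)
  have hu6 : u ≤ π / 6 := by
    have h12 : Real.arcsin (1 / 2) = π / 6 := by
      rw [← Real.sin_pi_div_six]
      exact Real.arcsin_sin (by linarith) (by linarith)
    have := Real.monotone_arcsin (show s / 2 ≤ 1 / 2 by linarith)
    linarith [this, h12.le, h12.ge]
  have hkey : s ≤ Real.sin (3 * u) := by
    rw [Real.sin_three_mul, hsin]
    nlinarith [mul_nonneg (mul_nonneg h0 (show (0:ℝ) ≤ 1 - s by linarith)) (show (0:ℝ) ≤ 1 + s by linarith)]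
  calc Real.arcsin s ≤ Real.arcsin (Real.sin (3 * u)) := Real.monotone_arcsin hkey
    _ = 3 * u := Real.arcsin_sin (by linarith) (by linarith)

private lemma key_concave (s : ℝ) (h0 : 0 ≤ s) (h1 : s ≤ 1) :
    6 * Real.arcsin (s / 2) ≤ π * s := by
  have hpi := Real.pi_pos
  have hconc := strictConcaveOn_sin_Icc.concaveOn
  have h := hconc.2 (Set.mem_Icc.2 ⟨le_refl 0, hpi.le⟩)
    (Set.mem_Icc.2 (show π / 6 ∈ Set.Icc (0:ℝ) π from ⟨by linarith, by linarith⟩))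
    (show (0:ℝ) ≤ 1 - s by linarith) h0 (show (1 - s) + s = 1 by ring)
  simp only [smul_eq_mul, mul_zero, zero_add, Real.sin_zero] at h
  rw [Real.sin_pi_div_six] at h
  have hsin : s / 2 ≤ Real.sin (s * (π / 6)) := by linarith
  have harcsin : Real.arcsin (s / 2) ≤ s * (π / 6) := by
    calc Real.arcsin (s / 2) ≤ Real.arcsin (Real.sin (s * (π / 6))) :=
          Real.monotone_arcsin hsin
      _ = s * (π / 6) := Real.arcsin_sin (by nlinarith) (by nlinarith)
  linarith

private lemma abs_arcsin (x : ℝ) : |Real.arcsin x| = Real.arcsin |x| := by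
  rcases le_or_gt 0 x with h | h
  · rw [abs_of_nonneg h, abs_of_nonneg (Real.arcsin_nonneg.2 h)]
  · rw [abs_of_neg h, abs_of_nonpos (Real.arcsin_nonpos.2 h.le), ← Real.arcsin_neg]

/-- For every `t ∈ (−1,1)`,
`(3/π)·|arcsin t − arcsin(t/2)| ≤ (2/π)·|arcsin t| ≤ (6/π)·|arcsin(t/2)| ≤ |t|`;
that is, for the standard bivariate normal distribution `|r| ≤ |τ| ≤ |ρ_S| ≤ |ρ|`. -/
theorem abs_r_le_abs_tau_le_abs_rhoS_le_abs_rho_bivariate_normal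
    (t : ℝ) (ht : t ∈ Set.Ioo (-1 : ℝ) 1) :
    (3 / π) * |Real.arcsin t - Real.arcsin (t / 2)| ≤ (2 / π) * |Real.arcsin t| ∧
      (2 / π) * |Real.arcsin t| ≤ (6 / π) * |Real.arcsin (t / 2)| ∧
        (6 / π) * |Real.arcsin (t / 2)| ≤ |t| := by
  obtain ⟨ht1, ht2⟩ := ht
  have hpi := Real.pi_pos
  set s := |t| with hs
  have hs0 : 0 ≤ s := abs_nonneg t
  have hs1 : s ≤ 1 := by rw [hs, abs_le]; constructor <;> linarith
  set A := Real.arcsin s with hA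
  set B := Real.arcsin (s / 2) with hB
  have hkey1 : A ≤ 3 * B := key_arcsin s hs0 hs1
  have hkey2 : 6 * B ≤ π * s := key_concave s hs0 hs1
  have hB0 : 0 ≤ B := Real.arcsin_nonneg.2 (by linarith)
  have hBA : B ≤ A := Real.monotone_arcsin (by linarith)
  have e1 : |Real.arcsin t| = A := by rw [hA, hs, abs_arcsin]
  have e2 : |Real.arcsin (t / 2)| = B := by
    rw [hB, hs, abs_arcsin, abs_div, abs_two]
  have e3 : |Real.arcsin t - Real.arcsin (t / 2)| = A - B := by
    rcases le_or_gt 0 t with h | h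
    · have h1 : Real.arcsin t = A := by rw [hA, hs, abs_of_nonneg h]
      have h2 : Real.arcsin (t / 2) = B := by
        rw [hB, hs, abs_of_nonneg h]
      rw [h1, h2, abs_of_nonneg (by linarith)]
    · have h1 : Real.arcsin t = -A := by
        rw [hA, hs, abs_of_neg h, Real.arcsin_neg, neg_neg]
      have h2 : Real.arcsin (t / 2) = -B := by
        rw [hB, hs, abs_of_neg h, neg_div, Real.arcsin_neg, neg_neg]
      rw [h1, h2, abs_of_nonpos (by linarith)]; ring
  rw [e1, e2, e3]
  have hne : π ≠ 0 := hpi.ne'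
  refine ⟨?_, ?_, ?_⟩
  · have : (3 / π) * (A - B) = (1 / π) * (3 * (A - B)) := by ring
    rw [this, show (2 / π) * A = (1 / π) * (2 * A) by ring]
    have h3 : 3 * (A - B) ≤ 2 * A := by linarith
    exact mul_le_mul_of_nonneg_left h3 (by positivity)
  · rw [show (2 / π) * A = (1 / π) * (2 * A) by ring,
      show (6 / π) * B = (1 / π) * (6 * B) by ring]
    exact mul_le_mul_of_nonneg_left (by linarith) (by positivity)
  · have : (6 / π) * B = (1 / π) * (6 * B) := by ring
    rw [this]
    have h := mul_le_mul_of_nonneg_left hkey2 (show (0:ℝ) ≤ 1 / π by positivity)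
    have : (1 / π) * (π * s) = s := by field_simp
    linarith
end

section
/- For the bivariate Pareto distribution with parameter t > 0, Kendall's tau equals 1/(2t+1); that is, 4·∫_{0}^{∞}∫_{0}^{∞} F_t(x,y)·f_t(x,y) dx dy − 1 = 1/(2t+1). -/
open MeasureTheory Real

section KTAux
open Set

private lemma kt_preimage (a : ℝ) : ((· + a) ⁻¹' Ioi a : Set ℝ) = Ioi 0 := by
  ext x; simp

private lemma kt_shift_integrable {p a : ℝ} (hp : p < -1) (ha : 0 < a) :
    IntegrableOn (fun y : ℝ => (y + a) ^ p) (Ioi 0) := by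
  have h := ((measurePreserving_add_right volume a).integrableOn_comp_preimage
    ((Homeomorph.addRight a).isClosedEmbedding.measurableEmbedding)).2
    (integrableOn_Ioi_rpow_of_lt hp ha)
  rwa [kt_preimage a] at h

private lemma kt_shift_integral {p a : ℝ} (hp : p < -1) (ha : 0 < a) :
    ∫ y in Ioi (0:ℝ), (y + a) ^ p = a ^ (p + 1) / (-(p + 1)) := by
  have h := (measurePreserving_add_right volume a).setIntegral_preimage_emb
    ((Homeomorph.addRight a).isClosedEmbedding.measurableEmbedding)
    (fun x : ℝ => x ^ p) (Ioi a)
  rw [kt_preimage a] at h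
  rw [show (∫ y in Ioi (0:ℝ), (y + a) ^ p)
      = ∫ y in Ioi (0:ℝ), (fun x : ℝ => x ^ p) (y + a) from rfl, h,
    integral_Ioi_rpow_of_lt hp ha, div_neg, neg_div]

private lemma kt_integrable {p q : ℝ} (hp : p < -2) (hq : q ≤ 0) :
    Integrable (fun z : ℝ × ℝ => (1 + z.1) ^ q * (z.1 + z.2 + 1) ^ p)
      ((volume.restrict (Ioi (0:ℝ))).prod (volume.restrict (Ioi (0:ℝ)))) := by
  have hb : IntegrableOn (fun x : ℝ => (x + 1) ^ (p / 2)) (Ioi 0) :=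
    kt_shift_integrable (by linarith) one_pos
  have hprod : Integrable (fun z : ℝ × ℝ => (z.1 + 1) ^ (p / 2) * (z.2 + 1) ^ (p / 2))
      ((volume.restrict (Ioi (0:ℝ))).prod (volume.restrict (Ioi (0:ℝ)))) :=
    hb.mul_prod hb
  refine hprod.mono ?_ ?_
  · have : Measurable fun z : ℝ × ℝ => (1 + z.1) ^ q * (z.1 + z.2 + 1) ^ p := by
      fun_prop
    exact this.aestronglyMeasurable
  · rw [Measure.prod_restrict]
    refine ae_restrict_of_forall_mem (measurableSet_Ioi.prod measurableSet_Ioi) ?_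
    rintro ⟨x, y⟩ ⟨hx, hy⟩
    simp only [Set.mem_Ioi] at hx hy
    have hx1 : (0:ℝ) < x + 1 := by linarith
    have hy1 : (0:ℝ) < y + 1 := by linarith
    have hb0 : (0:ℝ) < x + y + 1 := by linarith
    have key : (x + y + 1) ^ p ≤ (x + 1) ^ (p / 2) * (y + 1) ^ (p / 2) := by
      have h1 : (0:ℝ) < (x + 1) * (y + 1) := by positivity
      have h2 : (x + 1) * (y + 1) ≤ (x + y + 1) ^ (2:ℝ) := by
        rw [show (2:ℝ) = ((2:ℕ):ℝ) by norm_num, Real.rpow_natCast]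
        nlinarith
      have h3 : ((x + y + 1) ^ (2:ℝ)) ^ (p / 2) ≤ ((x + 1) * (y + 1)) ^ (p / 2) :=
        Real.rpow_le_rpow_of_nonpos h1 h2 (by linarith)
      calc (x + y + 1) ^ p = ((x + y + 1) ^ (2:ℝ)) ^ (p / 2) := by
            rw [← Real.rpow_mul hb0.le, show (2:ℝ) * (p / 2) = p by ring]
        _ ≤ ((x + 1) * (y + 1)) ^ (p / 2) := h3
        _ = (x + 1) ^ (p / 2) * (y + 1) ^ (p / 2) := Real.mul_rpow hx1.le hy1.le
    have hq1 : (1 + x) ^ q ≤ 1 :=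
      Real.rpow_le_one_of_one_le_of_nonpos (by linarith) hq
    have hT1 : (0:ℝ) ≤ (x + y + 1) ^ p := Real.rpow_nonneg hb0.le _
    have h5 : (1 + x) ^ q * (x + y + 1) ^ p ≤ (x + y + 1) ^ p :=
      mul_le_of_le_one_left hT1 hq1
    have hn1 : ‖(1 + x) ^ q * (x + y + 1) ^ p‖ = (1 + x) ^ q * (x + y + 1) ^ p := by
      rw [Real.norm_eq_abs, abs_of_nonneg]
      exact mul_nonneg (Real.rpow_nonneg (by linarith) _) hT1
    have hn2 : ‖(x + 1) ^ (p / 2) * (y + 1) ^ (p / 2)‖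
        = (x + 1) ^ (p / 2) * (y + 1) ^ (p / 2) := by
      rw [Real.norm_eq_abs, abs_of_nonneg]
      exact mul_nonneg (Real.rpow_nonneg hx1.le _) (Real.rpow_nonneg hy1.le _)
    rw [hn1, hn2]
    exact h5.trans key

private lemma kt_double {p q : ℝ} (hp : p < -2) (hq : q ≤ 0) (hpq : p + q + 2 < 0) :
    ∫ z : ℝ × ℝ, (1 + z.1) ^ q * (z.1 + z.2 + 1) ^ p
        ∂((volume.restrict (Ioi (0:ℝ))).prod (volume.restrict (Ioi (0:ℝ))))
      = 1 / ((p + 1) * (p + q + 2)) := by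
  rw [integral_prod _ (kt_integrable hp hq)]
  have h1 : ∀ x ∈ Ioi (0:ℝ),
      (∫ y in Ioi (0:ℝ), (1 + x) ^ q * (x + y + 1) ^ p)
        = (x + 1) ^ (p + q + 1) / (-(p + 1)) := by
    intro x hx
    simp only [Set.mem_Ioi] at hx
    have hx1 : (0:ℝ) < x + 1 := by linarith
    rw [MeasureTheory.integral_const_mul]
    have hinner : (fun y : ℝ => (x + y + 1) ^ p) = fun y : ℝ => (y + (x + 1)) ^ p := by
      funext y; ring_nf
    rw [hinner, kt_shift_integral (by linarith) hx1,
      show (1 + x) = (x + 1) by ring, ← mul_div_assoc, ← Real.rpow_add hx1,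
      show q + (p + 1) = p + q + 1 by ring]
  rw [setIntegral_congr_fun measurableSet_Ioi h1, integral_div,
    kt_shift_integral (p := p + q + 1) (by linarith) one_pos, Real.one_rpow]
  rw [div_div, neg_mul_neg, mul_comm, show p + q + 1 + 1 = p + q + 2 by ring]

end KTAux

open Set in
/-- For the bivariate Pareto distribution with parameter `t > 0`,
CDF `F_t(x,y) = 1 − (1+x)^{−t} − (1+y)^{−t} + (x+y+1)^{−t}` and density
`f_t(x,y) = t(t+1)(x+y+1)^{−(t+2)}` on `(0,∞)²`, Kendall's tau equals `1/(2t+1)`: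
`4·∫_{(0,∞)²} F_t(x,y)·f_t(x,y) dx dy − 1 = 1/(2t+1)`. -/
theorem kendall_tau_bivariate_pareto
    (t : ℝ) (ht : 0 < t)
    (F f : ℝ → ℝ → ℝ)
    (hF : ∀ x y, F x y
      = 1 - (1 + x) ^ (-t) - (1 + y) ^ (-t) + (x + y + 1) ^ (-t))
    (hf : ∀ x y, f x y = t * (t + 1) * (x + y + 1) ^ (-(t + 2))) :
    4 * (∫ p in Set.Ioi (0 : ℝ) ×ˢ Set.Ioi (0 : ℝ), F p.1 p.2 * f p.1 p.2)
      - 1 = 1 / (2 * t + 1) := by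
  set P := (volume.restrict (Ioi (0:ℝ))).prod (volume.restrict (Ioi (0:ℝ))) with hP
  set g2 : ℝ × ℝ → ℝ := fun z => (1 + z.1) ^ (-t) * (z.1 + z.2 + 1) ^ (-(t + 2)) with hg2
  have hpt : ∀ z ∈ Ioi (0:ℝ) ×ˢ Ioi (0:ℝ), F z.1 z.2 * f z.1 z.2
      = t * (t + 1) * ((1 + z.1) ^ (0:ℝ) * (z.1 + z.2 + 1) ^ (-(t + 2))
          - g2 z - g2 z.swap
          + (1 + z.1) ^ (0:ℝ) * (z.1 + z.2 + 1) ^ (-(2 * t + 2))) := by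
    rintro ⟨x, y⟩ ⟨hx, hy⟩
    simp only [Set.mem_Ioi] at hx hy
    have hb0 : (0:ℝ) < x + y + 1 := by linarith
    have h4 : (x + y + 1) ^ (-(2 * t + 2))
        = (x + y + 1) ^ (-t) * (x + y + 1) ^ (-(t + 2)) := by
      rw [← Real.rpow_add hb0]; ring_nf
    simp only [hg2, Prod.swap, hF, hf, Real.rpow_zero]
    rw [show y + x + 1 = x + y + 1 by ring, h4]
    ring
  have hstep : (∫ p in Set.Ioi (0 : ℝ) ×ˢ Set.Ioi (0 : ℝ), F p.1 p.2 * f p.1 p.2)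
      = ∫ z, t * (t + 1) * ((1 + z.1) ^ (0:ℝ) * (z.1 + z.2 + 1) ^ (-(t + 2))
          - g2 z - g2 z.swap
          + (1 + z.1) ^ (0:ℝ) * (z.1 + z.2 + 1) ^ (-(2 * t + 2))) ∂P := by
    rw [setIntegral_congr_fun (measurableSet_Ioi.prod measurableSet_Ioi) hpt,
      Measure.volume_eq_prod, ← Measure.prod_restrict]
  have h1 : Integrable (fun z : ℝ × ℝ => (1 + z.1) ^ (0:ℝ) * (z.1 + z.2 + 1) ^ (-(t + 2))) P :=
    kt_integrable (by linarith) le_rfl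
  have h2 : Integrable g2 P := kt_integrable (by linarith) (by linarith)
  have h3 : Integrable (fun z : ℝ × ℝ => g2 z.swap) P := h2.swap
  have h4 : Integrable (fun z : ℝ × ℝ => (1 + z.1) ^ (0:ℝ) * (z.1 + z.2 + 1) ^ (-(2 * t + 2))) P :=
    kt_integrable (by linarith) le_rfl
  have e1 : ∫ z, (1 + z.1) ^ (0:ℝ) * (z.1 + z.2 + 1) ^ (-(t + 2)) ∂P
      = 1 / ((-(t + 2) + 1) * (-(t + 2) + 0 + 2)) :=
    kt_double (by linarith) le_rfl (by linarith)
  have e2 : ∫ z, g2 z ∂P = 1 / ((-(t + 2) + 1) * (-(t + 2) + -t + 2)) :=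
    kt_double (by linarith) (by linarith) (by linarith)
  have e3 : ∫ z, g2 z.swap ∂P = 1 / ((-(t + 2) + 1) * (-(t + 2) + -t + 2)) := by
    rw [MeasureTheory.integral_prod_swap g2, e2]
  have e4 : ∫ z, (1 + z.1) ^ (0:ℝ) * (z.1 + z.2 + 1) ^ (-(2 * t + 2)) ∂P
      = 1 / ((-(2 * t + 2) + 1) * (-(2 * t + 2) + 0 + 2)) :=
    kt_double (by linarith) le_rfl (by linarith)
  have h12 : Integrable (fun z : ℝ × ℝ =>
      (1 + z.1) ^ (0:ℝ) * (z.1 + z.2 + 1) ^ (-(t + 2)) - g2 z) P := h1.sub h2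
  have h123 : Integrable (fun z : ℝ × ℝ =>
      (1 + z.1) ^ (0:ℝ) * (z.1 + z.2 + 1) ^ (-(t + 2)) - g2 z - g2 z.swap) P := h12.sub h3
  rw [hstep, MeasureTheory.integral_const_mul,
    integral_add h123 h4, integral_sub h12 h3,
    integral_sub h1 h2, e1, e2, e3, e4]
  have d1 : (t:ℝ) ≠ 0 := ht.ne'
  have d2 : (t:ℝ) + 1 ≠ 0 := by linarith
  have d3 : 2 * t + 1 ≠ 0 := by linarith
  rw [show (-(t + 2) + 1) * (-(t + 2) + 0 + 2) = t * (t + 1) by ring,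
    show (-(t + 2) + 1) * (-(t + 2) + -t + 2) = 2 * t * (t + 1) by ring,
    show (-(2 * t + 2) + 1) * (-(2 * t + 2) + 0 + 2) = 2 * t * (2 * t + 1) by ring]
  field_simp
  ring
end

section
/- For every t > 0, Kendall's tau of the distribution F_t equals −1/2; that is, 4·∫_{0}^{∞}∫_{0}^{∞} F_t(x,y)·f_t(x,y) dx dy − 1 = −1/2. In particular τ is free of the parameter t. -/
/-!
In the coordinates `(x, u) = (x, (1 + y) ^ t)` the CDF becomes
`K(x, u) = 1 - e^{-x} - u⁻¹ + u⁻¹ e^{-ux}` and `f_t(x, y) dx dy` becomes `x e^{-ux} dx du` on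
`(0, ∞) × (1, ∞)`, so `t` disappears. For fixed `u` the `x`-integral is a combination of
`∫₀^∞ x e^{-bx} dx = b⁻²`, namely `u⁻² - (1 + u)⁻² - 3/(4u³)`, and its integral over `(1, ∞)`
is `1/8`, whence `τ = 4/8 - 1 = -1/2`. Fubini applies because `|F_t| ≤ 1` and `f_t` is integrable.
-/

open MeasureTheory Real Filter Set Topology

lemma integrableOn_mul_exp_neg_mul {b : ℝ} (hb : 0 < b) :
    IntegrableOn (fun x : ℝ => x * exp (-(b * x))) (Ioi 0) := by
  simpa [neg_mul] using
    integrableOn_rpow_mul_exp_neg_mul_rpow (s := 1) (p := 1) (by norm_num) one_pos hb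

lemma integral_mul_exp_neg_mul {b : ℝ} (hb : 0 < b) :
    ∫ x in Ioi 0, x * exp (-(b * x)) = 1 / b ^ 2 := by
  have h := integral_rpow_mul_exp_neg_mul_Ioi (a := 2) two_pos hb
  norm_num [Gamma_two] at h
  simpa using h

lemma integrableOn_one_div_sq_Ioi {c : ℝ} (hc : 0 < c) :
    IntegrableOn (fun v : ℝ => 1 / v ^ 2) (Ioi c) := by
  refine (integrableOn_Ioi_rpow_of_lt (a := -2) (by norm_num) hc).congr_fun
    (fun v hv => ?_) measurableSet_Ioi
  have hv : 0 < v := hc.trans hv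
  show v ^ (-2 : ℝ) = 1 / v ^ 2
  rw [rpow_neg hv.le, one_div, ← rpow_natCast]
  norm_num

section OneAddRpow

lemma hasDerivAt_one_add_rpow (t : ℝ) {y : ℝ} (hy : -1 < y) :
    HasDerivAt (fun z : ℝ => (1 + z) ^ t) (t * (1 + y) ^ (t - 1)) y := by
  simpa using ((hasDerivAt_id y).const_add 1).rpow_const (p := t)
    (Or.inl (show (0 : ℝ) < 1 + y by linarith).ne')

lemma image_one_add_rpow_Ioi {t : ℝ} (ht : 0 < t) :
    (fun y : ℝ => (1 + y) ^ t) '' Ioi 0 = Ioi 1 := by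
  ext v
  constructor
  · rintro ⟨y, hy, rfl⟩
    exact one_lt_rpow (by linarith [mem_Ioi.mp hy]) ht
  · intro (hv : 1 < v)
    refine ⟨v ^ t⁻¹ - 1, ?_, ?_⟩
    · simpa using one_lt_rpow hv (inv_pos.mpr ht)
    · simp [rpow_inv_rpow (by linarith : (0 : ℝ) ≤ v) ht.ne']

lemma injOn_one_add_rpow {t : ℝ} (ht : t ≠ 0) :
    InjOn (fun y : ℝ => (1 + y) ^ t) (Ioi (-1)) := by
  intro a (ha : -1 < a) b (hb : -1 < b) hab
  have := rpow_left_injOn ht (by simp; linarith) (by simp; linarith) hab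
  linarith

variable {E : Type*} [NormedAddCommGroup E] [NormedSpace ℝ E]

theorem integral_comp_one_add_rpow_Ioi (g : ℝ → E) {t : ℝ} (ht : 0 < t) :
    ∫ y in Ioi 0, (t * (1 + y) ^ (t - 1)) • g ((1 + y) ^ t) = ∫ v in Ioi 1, g v := by
  rw [← image_one_add_rpow_Ioi ht, integral_image_eq_integral_abs_deriv_smul measurableSet_Ioi
    (fun y hy => (hasDerivAt_one_add_rpow t (by linarith [mem_Ioi.mp hy])).hasDerivWithinAt)
    ((injOn_one_add_rpow ht.ne').mono (Ioi_subset_Ioi (by norm_num)))]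
  refine setIntegral_congr_fun measurableSet_Ioi fun y (hy : 0 < y) => ?_
  rw [abs_of_pos (by positivity)]

theorem integrableOn_comp_one_add_rpow_Ioi_iff (g : ℝ → E) {t : ℝ} (ht : 0 < t) :
    IntegrableOn (fun y => (t * (1 + y) ^ (t - 1)) • g ((1 + y) ^ t)) (Ioi 0) ↔
      IntegrableOn g (Ioi 1) := by
  rw [← image_one_add_rpow_Ioi ht, integrableOn_image_iff_integrableOn_abs_deriv_smul
    measurableSet_Ioi
    (fun y hy => (hasDerivAt_one_add_rpow t (by linarith [mem_Ioi.mp hy])).hasDerivWithinAt)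
    ((injOn_one_add_rpow ht.ne').mono (Ioi_subset_Ioi (by norm_num)))]
  refine integrableOn_congr_fun (fun y (hy : 0 < y) => ?_) measurableSet_Ioi
  rw [abs_of_pos (by positivity)]

end OneAddRpow

/-- `F_t(x, y) = expParetoCDF x ((1 + y) ^ t)`. -/
noncomputable def expParetoCDF (x u : ℝ) : ℝ := 1 - exp (-x) - u⁻¹ + u⁻¹ * exp (-(u * x))

noncomputable def expParetoInner (u : ℝ) : ℝ := 1 / u ^ 2 - 1 / (1 + u) ^ 2 - 3 / (4 * u ^ 3)

lemma abs_expParetoCDF_le_one {x u : ℝ} (hx : 0 ≤ x) (hu : 1 ≤ u) :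
    |expParetoCDF x u| ≤ 1 := by
  have h₁ : exp (-x) ≤ 1 := exp_le_one_iff.mpr (by linarith)
  have h₂ : exp (-(u * x)) ≤ 1 := exp_le_one_iff.mpr (by nlinarith)
  have h₃ : u⁻¹ ≤ 1 := inv_le_one_of_one_le₀ hu
  have hx' : 0 < exp (-x) := exp_pos _
  have hux : 0 < exp (-(u * x)) := exp_pos _
  have split : expParetoCDF x u = (1 - exp (-x)) - u⁻¹ * (1 - exp (-(u * x))) := by
    unfold expParetoCDF; ring
  rw [split]
  refine abs_sub_le_of_nonneg_of_le (by linarith) (by linarith) (by positivity) ?_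
  calc u⁻¹ * (1 - exp (-(u * x))) ≤ 1 * 1 := by gcongr; linarith
    _ = 1 := one_mul 1

lemma integral_expParetoCDF_mul_exp {u : ℝ} (hu : 0 < u) :
    ∫ x in Ioi 0, expParetoCDF x u * (x * exp (-(u * x))) = expParetoInner u := by
  have h₁ := integrableOn_mul_exp_neg_mul hu
  have h₂ := integrableOn_mul_exp_neg_mul (by positivity : 0 < 1 + u)
  have h₃ := h₁.const_mul u⁻¹
  have h₄ := (integrableOn_mul_exp_neg_mul (by positivity : 0 < 2 * u)).const_mul u⁻¹
  have expand : (fun x => expParetoCDF x u * (x * exp (-(u * x)))) = fun x =>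
      x * exp (-(u * x)) - x * exp (-((1 + u) * x)) - u⁻¹ * (x * exp (-(u * x)))
        + u⁻¹ * (x * exp (-(2 * u * x))) := by
    ext x
    have e₁ : exp (-((1 + u) * x)) = exp (-x) * exp (-(u * x)) := by rw [← exp_add]; ring_nf
    have e₂ : exp (-(2 * u * x)) = exp (-(u * x)) * exp (-(u * x)) := by
      rw [← exp_add]; ring_nf
    rw [e₁, e₂, expParetoCDF]
    ring
  rw [expand, integral_add ((h₁.fun_sub h₂).fun_sub h₃) h₄, integral_sub (h₁.fun_sub h₂) h₃,
    integral_sub h₁ h₂, integral_const_mul, integral_const_mul, integral_mul_exp_neg_mul hu,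
    integral_mul_exp_neg_mul (by positivity), integral_mul_exp_neg_mul (by positivity),
    expParetoInner]
  field_simp
  ring

lemma expParetoInner_nonneg {v : ℝ} (hv : 1 ≤ v) : 0 ≤ expParetoInner v := by
  have hv₀ : 0 < v := by linarith
  have factor : expParetoInner v = (5 * v + 3) * (v - 1) / (4 * v ^ 3 * (1 + v) ^ 2) := by
    unfold expParetoInner
    field_simp
    ring
  rw [factor]
  exact div_nonneg (by nlinarith) (by positivity)

lemma integral_Ioi_one_expParetoInner : ∫ v in Ioi (1 : ℝ), expParetoInner v = 1 / 8 := by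
  have hderiv : ∀ v ∈ Ici (1 : ℝ),
      HasDerivAt (fun w => -w⁻¹ + (1 + w)⁻¹ + 3 / 8 * (w ^ 2)⁻¹) (expParetoInner v) v := by
    intro v (hv : 1 ≤ v)
    have hv : 0 < v := by linarith
    have h := ((hasDerivAt_inv hv.ne').fun_neg.fun_add
      (((hasDerivAt_id' v).const_add 1).fun_inv (by positivity))).fun_add
      (((hasDerivAt_pow 2 v).fun_inv (by positivity)).const_mul (3 / 8))
    refine h.congr_deriv ?_
    unfold expParetoInner
    field_simp
    ring
  have hlim : Tendsto (fun w : ℝ => -w⁻¹ + (1 + w)⁻¹ + 3 / 8 * (w ^ 2)⁻¹) atTop (𝓝 0) := by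
    have h₁ := tendsto_inv_atTop_zero (𝕜 := ℝ)
    have h₂ := h₁.comp (tendsto_atTop_add_const_left atTop (1 : ℝ) tendsto_id)
    have h₃ := h₁.comp (tendsto_pow_atTop (α := ℝ) two_ne_zero)
    simpa using (h₁.neg.add h₂).add (h₃.const_mul (3 / 8))
  rw [integral_Ioi_of_hasDerivAt_of_nonneg' hderiv
    (fun v hv => expParetoInner_nonneg (le_of_lt hv)) hlim]
  norm_num

lemma integrableOn_expPareto_density {t : ℝ} (ht : 0 < t) :
    IntegrableOn (fun p : ℝ × ℝ => t * (1 + p.2) ^ (t - 1) * (p.1 * exp (-((1 + p.2) ^ t * p.1))))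
      (Ioi 0 ×ˢ Ioi 0) := by
  rw [IntegrableOn, Measure.volume_eq_prod, ← Measure.prod_restrict,
    integrable_prod_iff' (by fun_prop)]
  have hu : ∀ y ∈ Ioi (0 : ℝ), 0 < (1 + y) ^ t := fun y hy =>
    rpow_pos_of_pos (by linarith [mem_Ioi.mp hy]) t
  refine ⟨?_, ?_⟩
  · filter_upwards [ae_restrict_mem measurableSet_Ioi] with y hy
    exact (integrableOn_mul_exp_neg_mul (hu y hy)).const_mul _
  · have h := (integrableOn_comp_one_add_rpow_Ioi_iff _ ht).2 (integrableOn_one_div_sq_Ioi one_pos)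
    refine h.congr_fun (fun y hy => ?_) measurableSet_Ioi
    have hy₀ : 0 < y := hy
    rw [← setIntegral_congr_fun measurableSet_Ioi fun x (hx : 0 < x) =>
      (norm_of_nonneg (by positivity)).symm]
    dsimp only
    rw [integral_const_mul, integral_mul_exp_neg_mul (hu y hy), smul_eq_mul]

lemma integrableOn_expParetoCDF_mul_density {t : ℝ} (ht : 0 < t) :
    IntegrableOn (fun p : ℝ × ℝ => t * (1 + p.2) ^ (t - 1)
      * (expParetoCDF p.1 ((1 + p.2) ^ t) * (p.1 * exp (-((1 + p.2) ^ t * p.1)))))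
      (Ioi 0 ×ˢ Ioi 0) := by
  refine (integrableOn_expPareto_density ht).mono' (by unfold expParetoCDF; fun_prop) ?_
  filter_upwards [ae_restrict_mem (measurableSet_Ioi.prod measurableSet_Ioi)]
    with ⟨x, y⟩ ⟨(hx : 0 < x), (hy : 0 < y)⟩
  have hK := abs_expParetoCDF_le_one hx.le (one_le_rpow (by linarith : (1 : ℝ) ≤ 1 + y) ht.le)
  dsimp only
  rw [norm_mul (t * _), norm_mul (expParetoCDF _ _),
    norm_of_nonneg (by positivity : 0 ≤ t * (1 + y) ^ (t - 1)),
    norm_of_nonneg (by positivity : 0 ≤ x * exp (-((1 + y) ^ t * x))), Real.norm_eq_abs]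
  exact mul_le_mul_of_nonneg_left (mul_le_of_le_one_left (by positivity) hK) (by positivity)

theorem integral_expParetoCDF_mul_density {t : ℝ} (ht : 0 < t) :
    ∫ p in Ioi 0 ×ˢ Ioi 0, t * (1 + p.2) ^ (t - 1)
      * (expParetoCDF p.1 ((1 + p.2) ^ t) * (p.1 * exp (-((1 + p.2) ^ t * p.1)))) = 1 / 8 := by
  have h := integrableOn_expParetoCDF_mul_density ht
  rw [IntegrableOn, Measure.volume_eq_prod, ← Measure.prod_restrict] at h
  rw [Measure.volume_eq_prod, ← Measure.prod_restrict, integral_prod_symm _ h]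
  calc ∫ y in Ioi 0, ∫ x in Ioi 0, t * (1 + y) ^ (t - 1)
        * (expParetoCDF x ((1 + y) ^ t) * (x * exp (-((1 + y) ^ t * x))))
      = ∫ y in Ioi 0, (t * (1 + y) ^ (t - 1)) • expParetoInner ((1 + y) ^ t) := by
        refine setIntegral_congr_fun measurableSet_Ioi fun y (hy : 0 < y) => ?_
        rw [integral_const_mul, integral_expParetoCDF_mul_exp (by positivity), smul_eq_mul]
    _ = ∫ v in Ioi 1, expParetoInner v := integral_comp_one_add_rpow_Ioi expParetoInner ht
    _ = 1 / 8 := integral_Ioi_one_expParetoInner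

/-- For every `t > 0`, the bivariate distribution with CDF
`F_t(x,y) = 1 − e^{−x} − (1+y)^{−t} + (1+y)^{−t}·e^{−x(1+y)^t}` and density
`f_t(x,y) = t·x·(1+y)^{t−1}·e^{−x(1+y)^t}` on `(0,∞)²` has Kendall's tau equal to
`−1/2`: `4·∫_{(0,∞)²} F_t(x,y)·f_t(x,y) dx dy − 1 = −1/2`. In particular `τ` is free
of the parameter `t`. -/
theorem kendall_tau_exponential_pareto_family
    (t : ℝ) (ht : 0 < t)
    (F f : ℝ → ℝ → ℝ)
    (hF : ∀ x y, F x y = 1 - Real.exp (-x) - (1 + y) ^ (-t)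
      + (1 + y) ^ (-t) * Real.exp (-x * (1 + y) ^ t))
    (hf : ∀ x y, f x y = t * x * (1 + y) ^ (t - 1) * Real.exp (-x * (1 + y) ^ t)) :
    4 * (∫ p in Set.Ioi (0 : ℝ) ×ˢ Set.Ioi (0 : ℝ), F p.1 p.2 * f p.1 p.2) - 1
      = -(1 / 2) := by
  have hFf : ∀ p ∈ Ioi (0 : ℝ) ×ˢ Ioi (0 : ℝ), F p.1 p.2 * f p.1 p.2 = t * (1 + p.2) ^ (t - 1)
      * (expParetoCDF p.1 ((1 + p.2) ^ t) * (p.1 * exp (-((1 + p.2) ^ t * p.1)))) := by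
    rintro ⟨x, y⟩ ⟨-, (hy : 0 < y)⟩
    rw [hF, hf, expParetoCDF, rpow_neg (by linarith), show -x * (1 + y) ^ t = -((1 + y) ^ t * x)
      by ring]
    ring
  rw [setIntegral_congr_fun (measurableSet_Ioi.prod measurableSet_Ioi) hFf,
    integral_expParetoCDF_mul_density ht]
  norm_num
end

section
/- For every t > 0, the correlation coefficient r of the distribution F_t equals 15/4 − 6·ln 2; that is, 6·∫_{0}^{∞}∫_{0}^{∞} (F_t(x,y) − (1 − e^{−x})·(1 − (1+y)^{−t}))·f_t(x,y) dx dy = 15/4 − 6·ln 2. In particular r is free of the parameter t. -/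
/-!
With `u = (1 + y) ^ t` one has `F - H G = u⁻¹ (e^{-x u} - e^{-x})`, so the integrand is
`t / (1 + y) · (x e^{-2 u x} - x e^{-(u + 1) x})`, which is `≤ 0` on the quadrant; its constant
sign justifies Fubini. Integrating in `x` gives `t / (1 + y) · (1 / (2 u)² - 1 / (u + 1)²)`, and the
substitution `u = (1 + y) ^ t` turns `t / (1 + y) dy` into `du / u`, which removes `t`.
What is left is a rational integral over `(1, ∞)`, equal to `5 / 8 - log 2`.
-/

open MeasureTheory Real Set Filter Topology

theorem integral_mul_exp_neg_mul_Ioi {b : ℝ} (hb : 0 < b) :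
    ∫ x in Ioi (0 : ℝ), x * exp (-(b * x)) = 1 / b ^ 2 := by
  have h := integral_rpow_mul_exp_neg_mul_Ioi two_pos hb
  norm_num [Gamma_two] at h
  simpa [div_pow] using h

theorem integrableOn_mul_exp_neg_mul_Ioi {b : ℝ} (hb : 0 < b) :
    IntegrableOn (fun x => x * exp (-(b * x))) (Ioi 0) :=
  .of_integral_ne_zero (by rw [integral_mul_exp_neg_mul_Ioi hb]; positivity)

theorem integral_Ioi_zero_smul_comp_one_add_rpow {E : Type*} [NormedAddCommGroup E]
    [NormedSpace ℝ E] (g : ℝ → E) {t : ℝ} (ht : 0 < t) :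
    ∫ y in Ioi 0, (t / (1 + y)) • g ((1 + y) ^ t) = ∫ u in Ioi 1, u⁻¹ • g u := by
  have h := integral_comp_rpow_Ioi_of_pos' (g := fun u => u⁻¹ • g u) ht zero_le_one
  rw [one_rpow] at h
  rw [← h]
  conv_rhs => rw [← (measurePreserving_add_left volume (1 : ℝ)).setIntegral_preimage_emb
    (measurableEmbedding_addLeft 1), preimage_const_add_Ioi, sub_self]
  refine setIntegral_congr_fun measurableSet_Ioi fun y (hy : 0 < y) => ?_
  have hy1 : 0 < 1 + y := by linarith
  simp only [smul_smul]
  congr 1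
  rw [rpow_sub_one hy1.ne']
  field_simp

theorem integral_Ioi_one_inv_mul_sub_inv_sq :
    ∫ u in Ioi 1, u⁻¹ * (1 / (2 * u) ^ 2 - 1 / (u + 1) ^ 2) = 5 / 8 - log 2 := by
  set Φ : ℝ → ℝ := fun u => log (u + 1) - log u - (8 * u ^ 2)⁻¹ - (u + 1)⁻¹ with hΦ
  have hderiv : ∀ u ∈ Ici (1 : ℝ),
      HasDerivAt Φ (u⁻¹ * (1 / (2 * u) ^ 2 - 1 / (u + 1) ^ 2)) u := by
    intro u (hu : 1 ≤ u)
    have hu0 : u ≠ 0 := by linarith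
    have hu1 : u + 1 ≠ 0 := by linarith
    have hlin := (hasDerivAt_id' u).add_const 1
    refine ((((hlin.log hu1).sub (hasDerivAt_log hu0)).sub
      (((hasDerivAt_pow 2 u).const_mul 8).inv (by positivity))).sub
      (hlin.inv hu1)).congr_deriv ?_
    field_simp
    ring
  have hnonpos : ∀ u ∈ Ioi (1 : ℝ), u⁻¹ * (1 / (2 * u) ^ 2 - 1 / (u + 1) ^ 2) ≤ 0 := by
    intro u (hu : 1 < u)
    have : 1 / (2 * u) ^ 2 ≤ 1 / (u + 1) ^ 2 := by
      gcongr
      linarith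
    exact mul_nonpos_of_nonneg_of_nonpos (by positivity) (by linarith)
  have hlim : Tendsto Φ atTop (𝓝 0) := by
    have h1 : Tendsto (fun u : ℝ => (8 * u ^ 2)⁻¹) atTop (𝓝 0) := tendsto_inv_atTop_zero.comp
      ((tendsto_pow_atTop two_ne_zero).const_mul_atTop (by norm_num))
    have h2 : Tendsto (fun u : ℝ => (u + 1)⁻¹) atTop (𝓝 0) :=
      tendsto_inv_atTop_zero.comp (tendsto_atTop_add_const_right _ 1 tendsto_id)
    simpa only [sub_zero] using ((tendsto_log_comp_add_sub_log 1).sub h1).sub h2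
  rw [integral_Ioi_of_hasDerivAt_of_nonpos' hderiv hnonpos hlim]
  norm_num [hΦ]
  ring

theorem integral_Ioi_div_one_add_mul_sub_inv_sq_rpow {t : ℝ} (ht : 0 < t) :
    ∫ y in Ioi 0, t / (1 + y) * (1 / (2 * (1 + y) ^ t) ^ 2 - 1 / ((1 + y) ^ t + 1) ^ 2)
      = 5 / 8 - log 2 :=
  (integral_Ioi_zero_smul_comp_one_add_rpow (fun u => 1 / (2 * u) ^ 2 - 1 / (u + 1) ^ 2) ht).trans
    integral_Ioi_one_inv_mul_sub_inv_sq

noncomputable def expParetoIntegrand (t : ℝ) (p : ℝ × ℝ) : ℝ :=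
  t / (1 + p.2) *
    (p.1 * exp (-(2 * (1 + p.2) ^ t * p.1)) - p.1 * exp (-(((1 + p.2) ^ t + 1) * p.1)))

theorem expParetoIntegrand_eq (t x : ℝ) {y : ℝ} (hy : 0 < 1 + y) :
    expParetoIntegrand t (x, y) =
      ((1 - exp (-x) - (1 + y) ^ (-t) + (1 + y) ^ (-t) * exp (-x * (1 + y) ^ t))
        - (1 - exp (-x)) * (1 - (1 + y) ^ (-t)))
        * (t * x * (1 + y) ^ (t - 1) * exp (-x * (1 + y) ^ t)) := by
  have hu : 0 < (1 + y) ^ t := rpow_pos_of_pos hy t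
  have hsq : exp (-(2 * (1 + y) ^ t * x)) = exp (-x * (1 + y) ^ t) * exp (-x * (1 + y) ^ t) := by
    rw [← exp_add]; ring_nf
  have hprod : exp (-(((1 + y) ^ t + 1) * x)) = exp (-x) * exp (-x * (1 + y) ^ t) := by
    rw [← exp_add]; ring_nf
  rw [expParetoIntegrand, hsq, hprod, rpow_neg hy.le, rpow_sub_one hy.ne']
  field_simp
  ring

theorem expParetoIntegrand_nonpos {t x y : ℝ} (ht : 0 ≤ t) (hx : 0 ≤ x) (hy : 0 ≤ y) :
    expParetoIntegrand t (x, y) ≤ 0 := by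
  have hu : 1 ≤ (1 + y) ^ t := one_le_rpow (by linarith) ht
  refine mul_nonpos_of_nonneg_of_nonpos (by positivity) (sub_nonpos.mpr ?_)
  gcongr
  linarith

theorem integrableOn_expParetoIntegrand_fst (t : ℝ) {y : ℝ} (hy : 0 < 1 + y) :
    IntegrableOn (fun x => expParetoIntegrand t (x, y)) (Ioi 0) := by
  simp only [expParetoIntegrand]
  exact ((integrableOn_mul_exp_neg_mul_Ioi (b := 2 * (1 + y) ^ t) (by positivity)).sub
    (integrableOn_mul_exp_neg_mul_Ioi (b := (1 + y) ^ t + 1) (by positivity))).const_mul _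

theorem integral_expParetoIntegrand_fst (t : ℝ) {y : ℝ} (hy : 0 < 1 + y) :
    ∫ x in Ioi 0, expParetoIntegrand t (x, y)
      = t / (1 + y) * (1 / (2 * (1 + y) ^ t) ^ 2 - 1 / ((1 + y) ^ t + 1) ^ 2) := by
  simp only [expParetoIntegrand]
  rw [integral_const_mul, integral_sub (integrableOn_mul_exp_neg_mul_Ioi (by positivity))
    (integrableOn_mul_exp_neg_mul_Ioi (by positivity)), integral_mul_exp_neg_mul_Ioi (by positivity),
    integral_mul_exp_neg_mul_Ioi (by positivity)]

theorem integrable_expParetoIntegrand {t : ℝ} (ht : 0 < t) :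
    Integrable (expParetoIntegrand t)
      ((volume.restrict (Ioi 0)).prod (volume.restrict (Ioi 0))) := by
  -- a non-integrable function has integral `0`, and `5 / 8 - log 2 ≠ 0`
  have houter := Integrable.of_integral_ne_zero (by
    rw [integral_Ioi_div_one_add_mul_sub_inv_sq_rpow ht]; linarith [log_two_gt_d9])
  rw [integrable_prod_iff' (by unfold expParetoIntegrand; fun_prop)]
  refine ⟨?_, houter.neg.congr ?_⟩ <;>
    filter_upwards [ae_restrict_mem measurableSet_Ioi] with y (hy : 0 < y)
  · exact integrableOn_expParetoIntegrand_fst t (by linarith)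
  · rw [Pi.neg_apply, ← integral_expParetoIntegrand_fst t (by linarith), ← integral_neg]
    refine setIntegral_congr_fun measurableSet_Ioi fun x (hx : 0 < x) => ?_
    rw [norm_of_nonpos (expParetoIntegrand_nonpos ht.le hx.le hy.le)]

theorem setIntegral_expParetoIntegrand {t : ℝ} (ht : 0 < t) :
    ∫ p in Ioi 0 ×ˢ Ioi 0, expParetoIntegrand t p = 5 / 8 - log 2 := by
  rw [Measure.volume_eq_prod, ← Measure.prod_restrict,
    integral_prod_symm _ (integrable_expParetoIntegrand ht),
    ← integral_Ioi_div_one_add_mul_sub_inv_sq_rpow ht]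
  exact setIntegral_congr_fun measurableSet_Ioi fun y (hy : 0 < y) =>
    integral_expParetoIntegrand_fst t (by linarith)

/-- For every `t > 0`, the bivariate distribution with CDF
`F_t(x,y) = 1 − e^{−x} − (1+y)^{−t} + (1+y)^{−t}·e^{−x(1+y)^t}`, density
`f_t(x,y) = t·x·(1+y)^{t−1}·e^{−x(1+y)^t}` on `(0,∞)²`, exponential marginal
`H(x) = 1 − e^{−x}` and Pareto marginal `G_t(y) = 1 − (1+y)^{−t}` has correlation
coefficient `r` equal to `15/4 − 6·ln 2`:
`6·∫_{(0,∞)²} (F_t(x,y) − (1 − e^{−x})·(1 − (1+y)^{−t}))·f_t(x,y) dx dy = 15/4 − 6·ln 2`.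
In particular `r` is free of the parameter `t`. -/
theorem r_exponential_pareto_family
    (t : ℝ) (ht : 0 < t)
    (F f : ℝ → ℝ → ℝ)
    (hF : ∀ x y, F x y = 1 - Real.exp (-x) - (1 + y) ^ (-t)
      + (1 + y) ^ (-t) * Real.exp (-x * (1 + y) ^ t))
    (hf : ∀ x y, f x y = t * x * (1 + y) ^ (t - 1) * Real.exp (-x * (1 + y) ^ t)) :
    6 * (∫ p in Set.Ioi (0 : ℝ) ×ˢ Set.Ioi (0 : ℝ),
        (F p.1 p.2 - (1 - Real.exp (-p.1)) * (1 - (1 + p.2) ^ (-t))) * f p.1 p.2)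
      = 15 / 4 - 6 * Real.log 2 := by
  have hintegrand : EqOn (fun p : ℝ × ℝ =>
      (F p.1 p.2 - (1 - exp (-p.1)) * (1 - (1 + p.2) ^ (-t))) * f p.1 p.2)
      (expParetoIntegrand t) (Ioi 0 ×ˢ Ioi 0) := by
    rintro ⟨x, y⟩ ⟨-, hy : 0 < y⟩
    simp only [hF, hf]
    exact (expParetoIntegrand_eq t x (by linarith)).symm
  rw [setIntegral_congr_fun (measurableSet_Ioi.prod measurableSet_Ioi) hintegrand,
    setIntegral_expParetoIntegrand ht]
  ring
end
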